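/- arXiv:2010.11600 — 2 statements merged into one kernel-verified Lean document; each statement's English description precedes it below -/
import Mathlib

section
/- Suppose the ambiguity degree satisfies γ < 1. Then for any classifier h and any (x,y) in the support of p with h(x) ≠ y, P_{S∼p(S|x,y)}[h(x) ∈ S] ≤ γ, hence P_{S}[h(x) ∉ S] ≥ 1 − γ. Consequently the partial label risk and classification error satisfy R_p(θ) ≥ (1−γ)·Err(θ), i.e., Err(θ) ≤ R_p(θ)/(1−γ). -/
open Finset

/-- If the ambiguity degree bound `γ < 1` holds, then for any classifier `h` and any
supported pair `(x,y)` with `h x ≠ y`, the probability that `h x ∈ S` is at most `γ`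
(so `P[h x ∉ S] ≥ 1 - γ`), and consequently `R_p ≥ (1-γ)·Err`, i.e.
`Err ≤ R_p / (1-γ)`. -/
theorem stmt5 {X : Type*} [Fintype X] {K : ℕ}
    (p : X → Fin K → ℝ) (pS : X → Fin K → Finset (Fin K) → ℝ)
    (hp : ∀ x y, 0 ≤ p x y)
    (hpS0 : ∀ x y S, 0 ≤ pS x y S)
    (hpS1 : ∀ x y, ∑ S, pS x y S = 1)
    (hsupp : ∀ x y S, y ∉ S → pS x y S = 0)
    (γ : ℝ) (hγ1 : γ < 1)
    (hγ : ∀ x y ybar, 0 < p x y → ybar ≠ y →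
      ∑ S ∈ Finset.univ.filter (fun S : Finset (Fin K) => ybar ∈ S), pS x y S ≤ γ)
    (h : X → Fin K) :
    (∀ x y, 0 < p x y → h x ≠ y →
      (∑ S ∈ Finset.univ.filter (fun S : Finset (Fin K) => h x ∈ S), pS x y S ≤ γ ∧
       1 - γ ≤ ∑ S ∈ Finset.univ.filter (fun S : Finset (Fin K) => h x ∉ S), pS x y S)) ∧
    (1 - γ) * (∑ x, ∑ y, p x y * (if h x = y then 0 else 1)) ≤
      ∑ x, ∑ y, p x y * ∑ S, pS x y S * (if h x ∈ S then 0 else 1) ∧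
    (∑ x, ∑ y, p x y * (if h x = y then 0 else 1)) ≤
      (∑ x, ∑ y, p x y * ∑ S, pS x y S * (if h x ∈ S then 0 else 1)) / (1 - γ) := by
  have key : ∀ x y, 0 < p x y → h x ≠ y →
      (∑ S ∈ Finset.univ.filter (fun S : Finset (Fin K) => h x ∈ S), pS x y S ≤ γ ∧
       1 - γ ≤ ∑ S ∈ Finset.univ.filter (fun S : Finset (Fin K) => h x ∉ S), pS x y S) := by
    intro x y hxy hne
    have h1 := hγ x y (h x) hxy hne
    refine ⟨h1, ?_⟩
    have hsplit : (∑ S ∈ Finset.univ.filter (fun S : Finset (Fin K) => h x ∈ S), pS x y S)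
        + (∑ S ∈ Finset.univ.filter (fun S : Finset (Fin K) => h x ∉ S), pS x y S) = 1 := by
      rw [Finset.sum_filter_add_sum_filter_not, hpS1]
    linarith
  refine ⟨key, ?_⟩
  have hinner : ∀ x y, ∑ S, pS x y S * (if h x ∈ S then 0 else 1) =
      ∑ S ∈ Finset.univ.filter (fun S : Finset (Fin K) => h x ∉ S), pS x y S := by
    intro x y
    rw [Finset.sum_filter]
    apply Finset.sum_congr rfl
    intro S _
    by_cases hS : h x ∈ S <;> simp [hS]
  have main : (1 - γ) * (∑ x, ∑ y, p x y * (if h x = y then 0 else 1)) ≤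
      ∑ x, ∑ y, p x y * ∑ S, pS x y S * (if h x ∈ S then 0 else 1) := by
    rw [Finset.mul_sum]
    apply Finset.sum_le_sum
    intro x _
    rw [Finset.mul_sum]
    apply Finset.sum_le_sum
    intro y _
    rw [hinner]
    by_cases heq : h x = y
    · simp [heq]
      exact mul_nonneg (hp x y) (Finset.sum_nonneg fun S _ => hpS0 x y S)
    · simp [heq]
      rcases eq_or_lt_of_le (hp x y) with hz | hz
      · simp [← hz]
      · have := (key x y hz heq).2
        calc (1 - γ) * p x y = p x y * (1 - γ) := by ring
          _ ≤ p x y * ∑ S ∈ Finset.univ.filter (fun S : Finset (Fin K) => h x ∉ S), pS x y S :=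
            mul_le_mul_of_nonneg_left this (le_of_lt hz)
  refine ⟨main, ?_⟩
  rw [le_div_iff₀ (by linarith)]
  linarith
end

section
/- Under the small ambiguity degree condition γ < 1, any classifier θ with zero partial label risk R_p(θ) = 0 has zero classification error Err(θ) = 0. -/
open Finset

/-- Under the small ambiguity degree condition `γ < 1`, any classifier with zero
partial label risk has zero classification error. -/
theorem stmt6 {X : Type*} [Fintype X] {K : ℕ}
    (p : X → Fin K → ℝ) (pS : X → Fin K → Finset (Fin K) → ℝ)
    (hp : ∀ x y, 0 ≤ p x y)
    (hpS0 : ∀ x y S, 0 ≤ pS x y S)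
    (hpS1 : ∀ x y, ∑ S, pS x y S = 1)
    (hsupp : ∀ x y S, y ∉ S → pS x y S = 0)
    (γ : ℝ) (hγ1 : γ < 1)
    (hγ : ∀ x y ybar, 0 < p x y → ybar ≠ y →
      ∑ S ∈ Finset.univ.filter (fun S : Finset (Fin K) => ybar ∈ S), pS x y S ≤ γ)
    (h : X → Fin K)
    (hrisk : ∑ x, ∑ y, p x y * ∑ S, pS x y S * (if h x ∈ S then 0 else 1) = 0) :
    ∑ x, ∑ y, p x y * (if h x = y then 0 else 1) = 0 := by
  have hinner_nonneg : ∀ x y, 0 ≤ ∑ S, pS x y S * (if h x ∈ S then 0 else 1) := by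
    intro x y
    apply Finset.sum_nonneg
    intro S _
    have : (0:ℝ) ≤ (if h x ∈ S then 0 else 1) := by positivity
    exact mul_nonneg (hpS0 x y S) this
  have hterm : ∀ x ∈ Finset.univ, ∀ y ∈ (Finset.univ : Finset (Fin K)),
      p x y * ∑ S, pS x y S * (if h x ∈ S then 0 else 1) = 0 := by
    intro x hx
    have h1 := (Finset.sum_eq_zero_iff_of_nonneg (fun x _ => Finset.sum_nonneg
      (fun y _ => mul_nonneg (hp x y) (hinner_nonneg x y)))).mp hrisk x hx
    exact (Finset.sum_eq_zero_iff_of_nonneg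
      (fun y _ => mul_nonneg (hp x y) (hinner_nonneg x y))).mp h1
  apply Finset.sum_eq_zero
  intro x _
  apply Finset.sum_eq_zero
  intro y _
  rcases eq_or_lt_of_le (hp x y) with hpe | hpp
  · simp [← hpe]
  by_cases hxy : h x = y
  · simp [hxy]
  exfalso
  have h2 : ∑ S, pS x y S * (if h x ∈ S then 0 else 1) = 0 := by
    have := hterm x (Finset.mem_univ x) y (Finset.mem_univ y)
    rcases mul_eq_zero.mp this with h' | h'
    · exact absurd h' (ne_of_gt hpp)
    · exact h'
  have h3 : ∀ S : Finset (Fin K), h x ∉ S → pS x y S = 0 := by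
    intro S hS
    have := (Finset.sum_eq_zero_iff_of_nonneg
      (fun S _ => mul_nonneg (hpS0 x y S)
        (by positivity : (0:ℝ) ≤ (if h x ∈ S then 0 else 1)))).mp h2 S (Finset.mem_univ S)
    simpa [hS] using this
  have hsplit : ∑ S ∈ Finset.univ.filter (fun S : Finset (Fin K) => h x ∈ S), pS x y S = 1 := by
    rw [← hpS1 x y]
    exact (Finset.sum_subset (Finset.filter_subset _ _)
      (fun S _ hS => h3 S (fun hmem => hS (Finset.mem_filter.mpr ⟨Finset.mem_univ S, hmem⟩))))
  have := hγ x y (h x) hpp hxy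
  rw [hsplit] at this
  linarith
end
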